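/- arXiv:2003.11005 — 6 statements merged into one kernel-verified Lean document; each statement's English description precedes it below -/
import Mathlib

section
/- Every connected evacuation graph contains a connected and convergent subgraph: if G = (N, A) is an evacuation graph in which every evacuation node has a directed path to some safe node, then there exists a subset A' ⊆ A of arcs such that in the subgraph (N, A') every node of E ∪ T has outdegree at most 1 and every evacuation node still has a directed path to some safe node. -/
/-- Chains of length `n` in the arc set `A`. -/
def evacChain {N : Type*} (A : Finset (N × N)) : ℕ → N → N → Prop
  | 0, v, s => v = s
  | n + 1, v, s => ∃ w, (v, w) ∈ A ∧ evacChain A n w s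

lemma rtg_to_evacChain {N : Type*} (A : Finset (N × N)) {v s : N}
    (h : Relation.ReflTransGen (fun i j : N => (i, j) ∈ A) v s) :
    ∃ n, evacChain A n v s := by
  induction h using Relation.ReflTransGen.head_induction_on with
  | refl => exact ⟨0, rfl⟩
  | head hab _ ih =>
    obtain ⟨n, hn⟩ := ih
    exact ⟨n + 1, _, hab, hn⟩

/-- Every connected evacuation graph contains a connected and
convergent subgraph: if every evacuation node has a directed path to some safe
node, then there is a subset `A'` of the arcs in which every node of `E ∪ T`
has outdegree at most one and every evacuation node still has a directed path
to some safe node. -/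
theorem connected_evacuation_graph_has_convergent_connected_subgraph
    {N : Type*} [Fintype N] [DecidableEq N]
    (E T S : Finset N) (A : Finset (N × N))
    (hpart : ∀ v : N,
      (v ∈ E ∧ v ∉ T ∧ v ∉ S) ∨ (v ∉ E ∧ v ∈ T ∧ v ∉ S) ∨ (v ∉ E ∧ v ∉ T ∧ v ∈ S))
    (hEnoIn : ∀ a ∈ A, Prod.snd a ∉ E)
    (hSnoOut : ∀ a ∈ A, Prod.fst a ∉ S)
    (hconn : ∀ k ∈ E, ∃ s ∈ S,
      Relation.ReflTransGen (fun i j : N => (i, j) ∈ A) k s) :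
    ∃ A' ⊆ A,
      (∀ i ∈ E ∪ T, ∀ j j' : N, (i, j) ∈ A' → (i, j') ∈ A' → j = j') ∧
      (∀ k ∈ E, ∃ s ∈ S,
        Relation.ReflTransGen (fun i j : N => (i, j) ∈ A') k s) := by
  classical
  -- nodes that reach S
  set inR : N → Prop := fun v => ∃ n, ∃ s ∈ S, evacChain A n v s with hinR
  -- shortest distance to S
  set d : N → ℕ := fun v => sInf {n | ∃ s ∈ S, evacChain A n v s} with hd
  have hmem : ∀ v, inR v → ∃ s ∈ S, evacChain A (d v) v s := by
    intro v ⟨n, hn⟩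
    exact Nat.sInf_mem (⟨n, hn⟩ : {n | ∃ s ∈ S, evacChain A n v s}.Nonempty)
  have key : ∀ v : N, ∃ w : N, (inR v ∧ v ∉ S) →
      ((v, w) ∈ A ∧ inR w ∧ d w < d v) := by
    intro v
    by_cases h : inR v ∧ v ∉ S
    · obtain ⟨s, hs, hchain⟩ := hmem v h.1
      rcases hdv : d v with _ | m
      · exfalso
        rw [hdv] at hchain
        exact h.2 (hchain ▸ hs)
      · rw [hdv] at hchain
        obtain ⟨w, hw, hwc⟩ := hchain
        refine ⟨w, fun _ => ⟨hw, ⟨m, s, hs, hwc⟩, ?_⟩⟩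
        calc d w ≤ m := Nat.sInf_le ⟨s, hs, hwc⟩
          _ < m + 1 := Nat.lt_succ_self m
    · exact ⟨v, fun hh => absurd hh h⟩
  choose f hf using key
  refine ⟨A.filter (fun a => a.2 = f a.1), Finset.filter_subset _ _, ?_, ?_⟩
  · intro i _ j j' hj hj'
    have h1 := (Finset.mem_filter.1 hj).2
    have h2 := (Finset.mem_filter.1 hj').2
    simp only at h1 h2
    rw [h1, h2]
  · -- connectivity in the subgraph
    have claim : ∀ n v, inR v → d v ≤ n → ∃ s ∈ S,
        Relation.ReflTransGen
          (fun i j : N => (i, j) ∈ A.filter (fun a => a.2 = f a.1)) v s := by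
      intro n
      induction n with
      | zero =>
        intro v hv hdv
        obtain ⟨s, hs, hchain⟩ := hmem v hv
        have : d v = 0 := Nat.le_zero.1 hdv
        rw [this] at hchain
        exact ⟨s, hs, hchain ▸ Relation.ReflTransGen.refl⟩
      | succ n ih =>
        intro v hv hdv
        by_cases hvS : v ∈ S
        · exact ⟨v, hvS, Relation.ReflTransGen.refl⟩
        · obtain ⟨hA, hR, hlt⟩ := hf v ⟨hv, hvS⟩
          have hdw : d (f v) ≤ n := Nat.lt_succ_iff.1 (lt_of_lt_of_le hlt hdv)
          obtain ⟨s, hs, hrtg⟩ := ih (f v) hR hdw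
          refine ⟨s, hs, Relation.ReflTransGen.head ?_ hrtg⟩
          exact Finset.mem_filter.2 ⟨hA, rfl⟩
    intro k hk
    obtain ⟨s, hs, hrtg⟩ := hconn k hk
    obtain ⟨n, hn⟩ := rtg_to_evacChain A hrtg
    exact claim (d k) k ⟨n, s, hs, hn⟩ le_rfl
end

section
/- Convergent evacuation plans never use both directions of a road segment (so the reverse arc is always free for contraflow): if G = (N, A) is an evacuation graph in which every node of E ∪ T has outdegree at most 1 and every node of E ∪ T has a directed path to some safe node, then for every arc (i, j) ∈ A with j ∉ S, the reverse arc (j, i) is not in A. -/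
/-- Convergent evacuation plans never use both directions of a
road segment: in a convergent evacuation graph in which every node of `E ∪ T`
can reach a safe node, for every arc `(i, j)` with `j` not safe, the reverse
arc `(j, i)` is not an arc of the graph. -/
theorem convergent_no_antiparallel_arcs
    {N : Type*} [Fintype N] [DecidableEq N]
    (E T S : Finset N) (A : Finset (N × N))
    (hpart : ∀ v : N,
      (v ∈ E ∧ v ∉ T ∧ v ∉ S) ∨ (v ∉ E ∧ v ∈ T ∧ v ∉ S) ∨ (v ∉ E ∧ v ∉ T ∧ v ∈ S))
    (hEnoIn : ∀ a ∈ A, Prod.snd a ∉ E)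
    (hSnoOut : ∀ a ∈ A, Prod.fst a ∉ S)
    (hconv : ∀ i ∈ E ∪ T, ∀ j j' : N, (i, j) ∈ A → (i, j') ∈ A → j = j')
    (hreach : ∀ i ∈ E ∪ T, ∃ s ∈ S,
      Relation.ReflTransGen (fun a b : N => (a, b) ∈ A) i s) :
    ∀ i j : N, (i, j) ∈ A → j ∉ S → (j, i) ∉ A := by
  intro i j hij hjS hji
  have hiS : i ∉ S := hSnoOut (i, j) hij
  have hiET : i ∈ E ∪ T := by
    rcases hpart i with ⟨h1, _, _⟩ | ⟨_, h2, _⟩ | ⟨_, _, h3⟩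
    · exact Finset.mem_union_left _ h1
    · exact Finset.mem_union_right _ h2
    · exact absurd h3 hiS
  have hjET : j ∈ E ∪ T := by
    rcases hpart j with ⟨h1, _, _⟩ | ⟨_, h2, _⟩ | ⟨_, _, h3⟩
    · exact Finset.mem_union_left _ h1
    · exact Finset.mem_union_right _ h2
    · exact absurd h3 hjS
  obtain ⟨s, hsS, hpath⟩ := hreach j hjET
  have key : ∀ x : N, Relation.ReflTransGen (fun a b : N => (a, b) ∈ A) j x →
      x = i ∨ x = j := by
    intro x hx
    induction hx with
    | refl => exact Or.inr rfl
    | tail hb hstep ih =>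
      rcases ih with rfl | rfl
      · exact Or.inr (hconv _ hiET _ _ hstep hij)
      · exact Or.inl (hconv _ hjET _ _ hstep hji)
  rcases key s hpath with rfl | rfl
  · exact hiS hsS
  · exact hjS hsS
end

section
/- The Magnanti–Wong core point used by the convergent Benders method is indeed a core point: let A be a finite nonempty set of arcs with a tail map tail : A → N into a finite node set N, let X = {x ∈ {0,1}^A : for every node i, Σ_{e : tail(e) = i} x_e ≤ 1}, and for each arc e let d(e) = |{e' ∈ A : tail(e') = tail(e)}|. Then the point x⁰ ∈ ℝ^A defined by x⁰_e = 1/(d(e) + 1) lies in the interior of the convex hull of X. -/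
open Finset

lemma aux_mem {A N : Type*} [Fintype A] [Fintype N] [DecidableEq N]
    (tail : A → N) (s : Finset N) :
    ∀ y : A → ℝ, (∀ e, 0 ≤ y e) →
      (∀ i : N, ∑ e ∈ Finset.univ.filter (fun e => tail e = i), y e ≤ 1) →
      (∀ e, tail e ∉ s → y e = 0 ∨ y e = 1) →
      y ∈ convexHull ℝ
        {x : A → ℝ | (∀ e : A, x e = 0 ∨ x e = 1) ∧
          ∀ i : N, ∑ e ∈ Finset.univ.filter (fun e => tail e = i), x e ≤ 1} := by
  classical
  induction s using Finset.induction_on with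
  | empty =>
      intro y h0 h1 hb
      exact subset_convexHull ℝ _ ⟨fun e => hb e (by simp), h1⟩
  | @insert i s hi IH =>
      intro y h0 h1 hb
      set S : ℝ := ∑ e ∈ Finset.univ.filter (fun e => tail e = i), y e with hS
      set pt : Option {e : A // tail e = i} → (A → ℝ) :=
        fun c e' => if tail e' = i then
            (match c with
             | none => 0
             | some e => if e' = e.1 then 1 else 0)
          else y e' with hpt
      set w : Option {e : A // tail e = i} → ℝ :=
        fun c => match c with
          | none => 1 - S
          | some e => y e.1 with hw
      have hsubty : ∑ e ∈ Finset.univ.filter (fun e => tail e = i), y e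
          = ∑ e : {e : A // tail e = i}, y e.1 := by
        exact Finset.sum_subtype _ (fun x => by simp) y
      have hsum : ∑ c : Option {e : A // tail e = i}, w c = 1 := by
        rw [Fintype.sum_option]
        simp only [hw]
        rw [hS, hsubty]
        ring
      have hrepr : ∑ c : Option {e : A // tail e = i}, w c • pt c = y := by
        funext e'
        rw [Finset.sum_apply]
        by_cases h : tail e' = i
        · simp only [hpt, hw, Pi.smul_apply, smul_eq_mul]
          rw [Fintype.sum_option]
          simp only [if_pos h, mul_zero, zero_add, mul_ite, mul_one, mul_zero]
          rw [Finset.sum_eq_single (⟨e', h⟩ : {e : A // tail e = i})]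
          · simp
          · intro b _ hb'
            rw [if_neg]
            intro he; exact hb' (Subtype.ext he.symm)
          · simp
        · simp only [hpt, hw, Pi.smul_apply, smul_eq_mul]
          rw [Fintype.sum_option]
          simp only [if_neg h]
          have : ∑ e : {e : A // tail e = i}, y e.1 * y e' = S * y e' := by
            rw [hS, hsubty, Finset.sum_mul]
          rw [this]; ring
      rw [← hrepr]
      apply (convex_convexHull ℝ _).sum_mem
      · intro c _
        rcases c with _ | e
        · simpa [hw] using h1 i
        · exact h0 e.1
      · exact hsum
      · intro c _
        apply IH
        · intro e'
          by_cases h : tail e' = i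
          · rcases c with _ | e
            · simp [hpt, h]
            · simp only [hpt, if_pos h]; split <;> norm_num
          · simpa [hpt, h] using h0 e'
        · intro j
          by_cases hj : j = i
          · subst hj
            rcases c with _ | e
            · have : ∀ e' ∈ Finset.univ.filter (fun e => tail e = j),
                  pt none e' = (0:ℝ) := by
                intro e' he'
                simp only [Finset.mem_filter] at he'
                simp [hpt, he'.2]
              rw [Finset.sum_congr rfl this]
              simp
            · have : ∀ e' ∈ Finset.univ.filter (fun e => tail e = j),
                  pt (some e) e' = if e' = e.1 then (1:ℝ) else 0 := by
                intro e' he'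
                simp only [Finset.mem_filter] at he'
                simp [hpt, he'.2]
              rw [Finset.sum_congr rfl this]
              rw [Finset.sum_ite_eq' (Finset.univ.filter (fun e' => tail e' = j)) e.1]
              simp [e.2]
          · have : ∀ e' ∈ Finset.univ.filter (fun e => tail e = j),
                pt c e' = y e' := by
              intro e' he'
              simp only [Finset.mem_filter] at he'
              simp [hpt, he'.2, hj]
            rw [Finset.sum_congr rfl this]
            exact h1 j
        · intro e' he'
          by_cases h : tail e' = i
          · rcases c with _ | e
            · left; simp [hpt, h]
            · simp only [hpt, if_pos h]
              split
              · right; rfl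
              · left; rfl
          · have : pt c e' = y e' := by simp [hpt, h]
            rw [this]
            exact hb e' (by simp [he', h])

/-- The Magnanti–Wong core point used by the convergent
Benders method is indeed a core point: the point assigning to each arc `e` the
value `1 / (|δ⁺(tail e)| + 1)` lies in the interior of the convex hull of the
binary arc selections with outdegree at most one at every node. -/
theorem core_point_mem_interior_convexHull
    {A N : Type*} [Fintype A] [Nonempty A] [Fintype N] [DecidableEq N]
    (tail : A → N) :
    (fun e : A =>
        (1 : ℝ) / (((Finset.univ.filter (fun e' => tail e' = tail e)).card : ℝ) + 1))
      ∈ interior (convexHull ℝ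
        {x : A → ℝ | (∀ e : A, x e = 0 ∨ x e = 1) ∧
          ∀ i : N, ∑ e ∈ Finset.univ.filter (fun e => tail e = i), x e ≤ 1}) := by
  classical
  set x0 : A → ℝ := fun e : A =>
      (1 : ℝ) / (((Finset.univ.filter (fun e' => tail e' = tail e)).card : ℝ) + 1) with hx0
  set c : ℝ := (Fintype.card A : ℝ) with hc
  have hc0 : (0:ℝ) ≤ c := by positivity
  set ε : ℝ := 1 / (c + 1)^2 with hε
  have hεpos : 0 < ε := by positivity
  -- each coordinate of x0 is at least ε
  have hx0ge : ∀ e : A, ε ≤ x0 e := by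
    intro e
    have hdc : ((Finset.univ.filter (fun e' => tail e' = tail e)).card : ℝ) ≤ c := by
      rw [hc]
      exact_mod_cast Finset.card_le_card (Finset.filter_subset _ _)
    have h1 : (0:ℝ) < ((Finset.univ.filter (fun e' => tail e' = tail e)).card : ℝ) + 1 := by
      positivity
    rw [hε, hx0]
    rw [div_le_div_iff₀ (by positivity) h1]
    nlinarith
  rw [mem_interior]
  refine ⟨Set.univ.pi (fun e => Set.Ioo (x0 e - ε) (x0 e + ε)), ?_, ?_, ?_⟩
  · intro y hy
    simp only [Set.mem_pi, Set.mem_univ, Set.mem_Ioo, forall_true_left] at hy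
    apply aux_mem tail Finset.univ
    · intro e
      have := (hy e).1
      have := hx0ge e
      linarith
    · intro i
      set F := Finset.univ.filter (fun e => tail e = i) with hF
      set d : ℝ := (F.card : ℝ) with hd
      have hd0 : (0:ℝ) ≤ d := by positivity
      have hdc : d ≤ c := by
        rw [hd, hc]
        exact_mod_cast Finset.card_le_card (Finset.filter_subset _ _)
      have hx0F : ∀ e ∈ F, x0 e = 1 / (d + 1) := by
        intro e he
        have he' : tail e = i := by
          simpa [hF] using (Finset.mem_filter.mp he).2
        rw [hx0]
        simp only []
        rw [show (Finset.univ.filter (fun e' => tail e' = tail e)) = F by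
          rw [hF, he']]
    -- bound the sum
      have hsum : ∑ e ∈ F, y e ≤ ∑ e ∈ F, (1 / (d + 1) + ε) := by
        apply Finset.sum_le_sum
        intro e he
        have := (hy e).2
        rw [hx0F e he] at this
        linarith
      have hconst : ∑ e ∈ F, (1 / (d + 1) + ε) = d * (1 / (d + 1) + ε) := by
        rw [Finset.sum_const, hd, nsmul_eq_mul]
      have harith : d * (1 / (d + 1) + ε) ≤ 1 := by
        have h1 : (0:ℝ) < d + 1 := by linarith
        have h2 : (0:ℝ) < (c + 1)^2 := by positivity
        have key : d * (d + 1) ≤ (c + 1)^2 := by nlinarith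
        have h3 : d * ε ≤ 1 / (d + 1) := by
          rw [hε, mul_one_div, div_le_div_iff₀ h2 h1]
          nlinarith
        have h4 : d * (1 / (d + 1)) + 1 / (d + 1) = 1 := by
          field_simp
        nlinarith [mul_le_mul_of_nonneg_left h3 hd0]
      calc ∑ e ∈ F, y e ≤ d * (1 / (d + 1) + ε) := by rw [← hconst]; exact hsum
        _ ≤ 1 := harith
    · intro e he
      simp at he
  · exact isOpen_set_pi Set.finite_univ (fun e _ => isOpen_Ioo)
  · simp only [Set.mem_pi, Set.mem_univ, Set.mem_Ioo, forall_true_left]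
    intro e
    constructor <;> [linarith [hεpos]; linarith [hεpos]]
end

section
/- Aggregation over time turns any feasible Benders subproblem flow into a feasible restricted-master flow with the same objective (so the convergent restricted master problem is a valid relaxation): in the time-expanded flow setting, let x ∈ {0,1}^A and let φ be a flow over horizon H for x. Define ψ_e = Σ_{t ∈ H, t + s_e ≤ T_max} φ_{e,t} for each arc e. Then ψ satisfies: (a) conservation at every transit node i: Σ_{e : head(e) = i} ψ_e = Σ_{e : tail(e) = i} ψ_e; (b) aggregated capacity: ψ_e ≤ x_e · Σ_{t ∈ H} u_{e,t} for every arc e; (c) demand: Σ_{e : tail(e) = k} ψ_e ≤ d_k for every evacuation node k; and (d) Σ_{k ∈ E} Σ_{e : tail(e) = k} ψ_e equals the objective value of φ. -/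
lemma agg_sum_filter_swap {A : Type*} [Fintype A] (n : ℕ)
    (P : A → Prop) [DecidablePred P] (Q : A → ℕ → Prop)
    [∀ e, DecidablePred (Q e)] (f : A → ℕ → ℝ) :
    ∑ e ∈ Finset.univ.filter P, ∑ t ∈ (Finset.range n).filter (Q e), f e t
      = ∑ t ∈ Finset.range n,
          ∑ e ∈ Finset.univ.filter (fun e => P e ∧ Q e t), f e t := by
  calc ∑ e ∈ Finset.univ.filter P, ∑ t ∈ (Finset.range n).filter (Q e), f e t
      = ∑ e ∈ Finset.univ.filter P, ∑ t ∈ Finset.range n,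
          (if Q e t then f e t else 0) := by
        refine Finset.sum_congr rfl fun e _ => ?_
        rw [Finset.sum_filter]
    _ = ∑ t ∈ Finset.range n, ∑ e ∈ Finset.univ.filter P,
          (if Q e t then f e t else 0) := Finset.sum_comm
    _ = ∑ t ∈ Finset.range n,
          ∑ e ∈ Finset.univ.filter (fun e => P e ∧ Q e t), f e t := by
        refine Finset.sum_congr rfl fun t _ => ?_
        rw [← Finset.sum_filter, Finset.filter_filter]


/-- Aggregation over time turns any feasible Benders
subproblem flow into a feasible restricted-master flow with the same objective:
given a flow `φ` over the horizon `{0, …, Tmax}` for a binary arc selection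
`x`, the aggregate flow `ψ_e = Σ_{t ∈ H, t + s_e ≤ Tmax} φ_{e,t}` satisfies
conservation at every transit node, the aggregated capacity
`ψ_e ≤ x_e · Σ_{t ∈ H} u_{e,t}`, the demand constraints, and has the same
objective value as `φ`. -/
theorem aggregate_flow_feasible_convergent_master
    {N A : Type*} [Fintype N] [Fintype A] [DecidableEq N]
    (tail head : A → N) (E T S : Finset N)
    (hpart : ∀ v : N,
      (v ∈ E ∧ v ∉ T ∧ v ∉ S) ∨ (v ∉ E ∧ v ∈ T ∧ v ∉ S) ∨ (v ∉ E ∧ v ∉ T ∧ v ∈ S))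
    (hEnoIn : ∀ e : A, head e ∉ E)
    (hSnoOut : ∀ e : A, tail e ∉ S)
    (s : A → ℕ) (hs : ∀ e : A, 1 ≤ s e)
    (Tmax : ℕ)
    (u : A → ℕ → ℝ) (hu : ∀ e t, 0 ≤ u e t)
    (d : N → ℝ) (hd : ∀ k ∈ E, 0 ≤ d k)
    (x : A → ℝ) (hx : ∀ e : A, x e = 0 ∨ x e = 1)
    (φ : A → ℕ → ℝ)
    (hφnonneg : ∀ e t, t + s e ≤ Tmax → 0 ≤ φ e t)
    (hcons : ∀ i ∈ T, ∀ t ≤ Tmax,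
      ∑ e ∈ Finset.univ.filter (fun e => head e = i ∧ s e ≤ t), φ e (t - s e)
        = ∑ e ∈ Finset.univ.filter (fun e => tail e = i ∧ t + s e ≤ Tmax), φ e t)
    (hcap : ∀ e t, t + s e ≤ Tmax → φ e t ≤ x e * u e t)
    (hdem : ∀ k ∈ E,
      ∑ t ∈ Finset.range (Tmax + 1),
        ∑ e ∈ Finset.univ.filter (fun e => tail e = k ∧ t + s e ≤ Tmax), φ e t
      ≤ d k) :
    -- (a) conservation of the aggregate flow at every transit node
    (∀ i ∈ T,
      ∑ e ∈ Finset.univ.filter (fun e => head e = i),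
        (∑ t ∈ (Finset.range (Tmax + 1)).filter (fun t => t + s e ≤ Tmax), φ e t)
      = ∑ e ∈ Finset.univ.filter (fun e => tail e = i),
        (∑ t ∈ (Finset.range (Tmax + 1)).filter (fun t => t + s e ≤ Tmax), φ e t)) ∧
    -- (b) aggregated capacity
    (∀ e : A,
      (∑ t ∈ (Finset.range (Tmax + 1)).filter (fun t => t + s e ≤ Tmax), φ e t)
        ≤ x e * ∑ t ∈ Finset.range (Tmax + 1), u e t) ∧
    -- (c) demand
    (∀ k ∈ E,
      ∑ e ∈ Finset.univ.filter (fun e => tail e = k),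
        (∑ t ∈ (Finset.range (Tmax + 1)).filter (fun t => t + s e ≤ Tmax), φ e t)
      ≤ d k) ∧
    -- (d) same objective value
    (∑ k ∈ E, ∑ e ∈ Finset.univ.filter (fun e => tail e = k),
        (∑ t ∈ (Finset.range (Tmax + 1)).filter (fun t => t + s e ≤ Tmax), φ e t)
      = ∑ k ∈ E, ∑ t ∈ Finset.range (Tmax + 1),
          ∑ e ∈ Finset.univ.filter (fun e => tail e = k ∧ t + s e ≤ Tmax), φ e t) := by
  refine ⟨?_, ?_, ?_, ?_⟩
  · -- (a) conservation
    intro i hi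
    have key : ∀ e : A,
        ∑ t ∈ (Finset.range (Tmax + 1)).filter (fun t => s e ≤ t), φ e (t - s e)
          = ∑ t ∈ (Finset.range (Tmax + 1)).filter (fun t => t + s e ≤ Tmax),
              φ e t := by
      intro e
      refine Finset.sum_nbij' (fun t => t - s e) (fun t => t + s e) ?_ ?_ ?_ ?_ ?_
      · intro t ht
        simp only [Finset.mem_filter, Finset.mem_range] at ht ⊢
        omega
      · intro t ht
        simp only [Finset.mem_filter, Finset.mem_range] at ht ⊢
        omega
      · intro t ht
        simp only [Finset.mem_filter, Finset.mem_range] at ht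
        omega
      · intro t ht
        simp only [Finset.mem_filter, Finset.mem_range] at ht
        omega
      · intro t ht
        rfl
    calc ∑ e ∈ Finset.univ.filter (fun e => head e = i),
          ∑ t ∈ (Finset.range (Tmax + 1)).filter (fun t => t + s e ≤ Tmax), φ e t
        = ∑ e ∈ Finset.univ.filter (fun e => head e = i),
            ∑ t ∈ (Finset.range (Tmax + 1)).filter (fun t => s e ≤ t),
              φ e (t - s e) := by
          exact Finset.sum_congr rfl fun e _ => (key e).symm
      _ = ∑ t ∈ Finset.range (Tmax + 1),
            ∑ e ∈ Finset.univ.filter (fun e => head e = i ∧ s e ≤ t),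
              φ e (t - s e) :=
          agg_sum_filter_swap (Tmax + 1) (fun e => head e = i)
            (fun e t => s e ≤ t) (fun e t => φ e (t - s e))
      _ = ∑ t ∈ Finset.range (Tmax + 1),
            ∑ e ∈ Finset.univ.filter (fun e => tail e = i ∧ t + s e ≤ Tmax),
              φ e t := by
          refine Finset.sum_congr rfl fun t ht => ?_
          exact hcons i hi t (Nat.lt_succ_iff.mp (Finset.mem_range.mp ht))
      _ = ∑ e ∈ Finset.univ.filter (fun e => tail e = i),
            ∑ t ∈ (Finset.range (Tmax + 1)).filter (fun t => t + s e ≤ Tmax),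
              φ e t :=
          (agg_sum_filter_swap (Tmax + 1) (fun e => tail e = i)
            (fun e t => t + s e ≤ Tmax) φ).symm
  · -- (b) capacity
    intro e
    have hxnn : 0 ≤ x e := by rcases hx e with h | h <;> rw [h] <;> norm_num
    calc ∑ t ∈ (Finset.range (Tmax + 1)).filter (fun t => t + s e ≤ Tmax), φ e t
        ≤ ∑ t ∈ (Finset.range (Tmax + 1)).filter (fun t => t + s e ≤ Tmax),
            x e * u e t := by
          refine Finset.sum_le_sum fun t ht => ?_
          exact hcap e t (Finset.mem_filter.mp ht).2
      _ ≤ ∑ t ∈ Finset.range (Tmax + 1), x e * u e t := by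
          refine Finset.sum_le_sum_of_subset_of_nonneg
            (Finset.filter_subset _ _) fun t _ _ => ?_
          exact mul_nonneg hxnn (hu e t)
      _ = x e * ∑ t ∈ Finset.range (Tmax + 1), u e t := by
          rw [Finset.mul_sum]
  · -- (c) demand
    intro k hk
    rw [agg_sum_filter_swap (Tmax + 1) (fun e => tail e = k)
      (fun e t => t + s e ≤ Tmax) φ]
    exact hdem k hk
  · -- (d) objective
    refine Finset.sum_congr rfl fun k _ => ?_
    exact agg_sum_filter_swap (Tmax + 1) (fun e => tail e = k)
      (fun e t => t + s e ≤ Tmax) φ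
end

section
/- Validity of the Benders optimality cut via weak duality: in the time-expanded flow setting, let x̄ ∈ {0,1}^A. Suppose given nonnegative reals π_{e,t} (for e ∈ A, t ∈ H with t + s_e ≤ T_max), nonnegative reals π_k (for k ∈ E), and arbitrary reals σ_{i,t} for transit nodes i ∈ T and t ∈ H (with σ_{j,t} understood to be 0 when j ∈ S), such that for every arc e with tail i and head j and every t ∈ H with t + s_e ≤ T_max: σ_{j, t+s_e} − [i ∈ T]·σ_{i,t} + π_{e,t} + [i ∈ E]·π_i ≥ [i ∈ E], where [P] is 1 if P holds and 0 otherwise. Then for every flow φ over horizon H for x̄, the objective value of φ is at most Σ_{e ∈ A} x̄_e · Σ_{t ∈ H} u_{e,t} · π_{e,t} + Σ_{k ∈ E} d_k · π_k. -/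
open Finset

private lemma benders_sum_fiber {N A : Type*} [Fintype A] [DecidableEq N]
    (tl : A → N) (E' : Finset N) (P : A → Prop) [DecidablePred P] (g : A → ℝ) :
    ∑ k ∈ E', ∑ e ∈ Finset.univ.filter (fun e => tl e = k ∧ P e), g e
      = ∑ e ∈ Finset.univ.filter P, (if tl e ∈ E' then g e else 0) := by
  simp only [Finset.sum_filter]
  rw [Finset.sum_comm]
  refine Finset.sum_congr rfl fun e _ => ?_
  by_cases hP : P e
  · simp [hP, Finset.sum_ite_eq]
  · simp [hP]

private lemma benders_shift_sum (Tmax c : ℕ) (g : ℕ → ℝ) :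
    ∑ t ∈ (Finset.range (Tmax+1)).filter (fun t => t + c ≤ Tmax), g (t + c)
      = ∑ t ∈ (Finset.range (Tmax+1)).filter (fun t => c ≤ t), g t := by
  apply Finset.sum_nbij' (i := fun t => t + c) (j := fun t => t - c) <;>
    intros <;> simp_all [Finset.mem_filter, Finset.mem_range] <;> omega

private lemma benders_swap {A : Type*} [Fintype A] (Q : A → ℕ → Prop)
    [∀ e t, Decidable (Q e t)] (R : Finset ℕ) (f : A → ℕ → ℝ) :
    ∑ t ∈ R, ∑ e ∈ Finset.univ.filter (fun e => Q e t), f e t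
      = ∑ e : A, ∑ t ∈ R.filter (fun t => Q e t), f e t := by
  simp only [Finset.sum_filter]
  exact Finset.sum_comm



/-- Validity of the Benders optimality cut via weak duality:
if the dual multipliers `π_{e,t} ≥ 0` (capacity), `π_k ≥ 0` (demand) and
`σ_{i,t}` (conservation, with `σ = 0` on safe nodes) satisfy dual feasibility
for every arc and time, then the objective value of every flow `φ` over the
horizon for `x̄` is at most
`Σ_e x̄_e · Σ_t u_{e,t} · π_{e,t} + Σ_{k ∈ E} d_k · π_k`. -/
theorem benders_optimality_cut_valid
    {N A : Type*} [Fintype N] [Fintype A] [DecidableEq N]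
    (tail head : A → N) (E T S : Finset N)
    (hpart : ∀ v : N,
      (v ∈ E ∧ v ∉ T ∧ v ∉ S) ∨ (v ∉ E ∧ v ∈ T ∧ v ∉ S) ∨ (v ∉ E ∧ v ∉ T ∧ v ∈ S))
    (hEnoIn : ∀ e : A, head e ∉ E)
    (hSnoOut : ∀ e : A, tail e ∉ S)
    (s : A → ℕ) (hs : ∀ e : A, 1 ≤ s e)
    (Tmax : ℕ)
    (u : A → ℕ → ℝ) (hu : ∀ e t, 0 ≤ u e t)
    (d : N → ℝ) (hd : ∀ k ∈ E, 0 ≤ d k)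
    (xbar : A → ℝ) (hxbar : ∀ e : A, xbar e = 0 ∨ xbar e = 1)
    -- dual multipliers
    (π : A → ℕ → ℝ) (hπ : ∀ e t, t + s e ≤ Tmax → 0 ≤ π e t)
    (πd : N → ℝ) (hπd : ∀ k ∈ E, 0 ≤ πd k)
    (σ : N → ℕ → ℝ) (hσS : ∀ j ∈ S, ∀ t, σ j t = 0)
    -- dual feasibility
    (hdual : ∀ e : A, ∀ t, t + s e ≤ Tmax →
      (if tail e ∈ E then (1 : ℝ) else 0) ≤
        σ (head e) (t + s e) - (if tail e ∈ T then σ (tail e) t else 0)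
          + π e t + (if tail e ∈ E then πd (tail e) else 0)) :
    -- conclusion: the cut bounds the objective of every feasible flow
    ∀ φ : A → ℕ → ℝ,
      (∀ e t, t + s e ≤ Tmax → 0 ≤ φ e t) →
      (∀ i ∈ T, ∀ t ≤ Tmax,
        ∑ e ∈ Finset.univ.filter (fun e => head e = i ∧ s e ≤ t), φ e (t - s e)
          = ∑ e ∈ Finset.univ.filter (fun e => tail e = i ∧ t + s e ≤ Tmax), φ e t) →
      (∀ e t, t + s e ≤ Tmax → φ e t ≤ xbar e * u e t) →
      (∀ k ∈ E,
        ∑ t ∈ Finset.range (Tmax + 1),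
          ∑ e ∈ Finset.univ.filter (fun e => tail e = k ∧ t + s e ≤ Tmax), φ e t
        ≤ d k) →
      ∑ k ∈ E, ∑ t ∈ Finset.range (Tmax + 1),
          ∑ e ∈ Finset.univ.filter (fun e => tail e = k ∧ t + s e ≤ Tmax), φ e t
        ≤ (∑ e : A, xbar e *
            ∑ t ∈ (Finset.range (Tmax + 1)).filter (fun t => t + s e ≤ Tmax),
              u e t * π e t)
          + ∑ k ∈ E, d k * πd k := by
  classical
  intro φ hφ0 hcons hcap hdem
  set R := Finset.range (Tmax + 1) with hR
  -- the common value of S1 and S2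
  set C : ℝ := ∑ t ∈ R, ∑ j : N, (if j ∈ T then σ j t *
      ∑ e ∈ Finset.univ.filter (fun e => tail e = j ∧ t + s e ≤ Tmax), φ e t else 0) with hC
  have step0 :
      ∑ k ∈ E, ∑ t ∈ R, ∑ e ∈ Finset.univ.filter (fun e => tail e = k ∧ t + s e ≤ Tmax), φ e t
        = ∑ t ∈ R, ∑ e ∈ Finset.univ.filter (fun e => t + s e ≤ Tmax),
            (if tail e ∈ E then φ e t else 0) := by
    rw [Finset.sum_comm]
    exact Finset.sum_congr rfl fun t _ =>
      benders_sum_fiber tail E (fun e => t + s e ≤ Tmax) (fun e => φ e t)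
  have step1 :
      ∑ t ∈ R, ∑ e ∈ Finset.univ.filter (fun e => t + s e ≤ Tmax),
          (if tail e ∈ E then φ e t else 0)
        ≤ ∑ t ∈ R, ∑ e ∈ Finset.univ.filter (fun e => t + s e ≤ Tmax),
            (σ (head e) (t + s e) - (if tail e ∈ T then σ (tail e) t else 0)
              + π e t + (if tail e ∈ E then πd (tail e) else 0)) * φ e t := by
    refine Finset.sum_le_sum fun t _ => Finset.sum_le_sum fun e he => ?_
    simp only [Finset.mem_filter] at he
    have hF := he.2
    calc (if tail e ∈ E then φ e t else 0)
        = (if tail e ∈ E then (1:ℝ) else 0) * φ e t := by split_ifs <;> ring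
      _ ≤ _ := mul_le_mul_of_nonneg_right (hdual e t hF) (hφ0 e t hF)
  have split :
      ∑ t ∈ R, ∑ e ∈ Finset.univ.filter (fun e => t + s e ≤ Tmax),
          (σ (head e) (t + s e) - (if tail e ∈ T then σ (tail e) t else 0)
            + π e t + (if tail e ∈ E then πd (tail e) else 0)) * φ e t
      = (∑ t ∈ R, ∑ e ∈ Finset.univ.filter (fun e => t + s e ≤ Tmax),
            σ (head e) (t + s e) * φ e t)
        - (∑ t ∈ R, ∑ e ∈ Finset.univ.filter (fun e => t + s e ≤ Tmax),
            (if tail e ∈ T then σ (tail e) t else 0) * φ e t)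
        + (∑ t ∈ R, ∑ e ∈ Finset.univ.filter (fun e => t + s e ≤ Tmax),
            π e t * φ e t)
        + (∑ t ∈ R, ∑ e ∈ Finset.univ.filter (fun e => t + s e ≤ Tmax),
            (if tail e ∈ E then πd (tail e) else 0) * φ e t) := by
    simp only [sub_mul, add_mul, Finset.sum_add_distrib, Finset.sum_sub_distrib]
  -- S1 = C
  have hS1 : ∑ t ∈ R, ∑ e ∈ Finset.univ.filter (fun e => t + s e ≤ Tmax),
        σ (head e) (t + s e) * φ e t = C := by
    rw [benders_swap (fun e t => t + s e ≤ Tmax)]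
    have hre : ∀ e : A,
        ∑ t ∈ R.filter (fun t => t + s e ≤ Tmax), σ (head e) (t + s e) * φ e t
          = ∑ t ∈ R.filter (fun t => s e ≤ t), σ (head e) t * φ e (t - s e) := by
      intro e
      have := benders_shift_sum Tmax (s e) (fun t' => σ (head e) t' * φ e (t' - s e))
      simpa using this
    rw [Finset.sum_congr rfl fun e _ => hre e]
    rw [← benders_swap (fun e t => s e ≤ t)]
    refine Finset.sum_congr rfl fun t ht => ?_
    have htle : t ≤ Tmax := by
      simp only [hR, Finset.mem_range] at ht; omega
    have hfib := benders_sum_fiber head Finset.univ (fun e => s e ≤ t)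
        (fun e => σ (head e) t * φ e (t - s e))
    simp only [Finset.mem_univ, if_true] at hfib
    rw [← hfib]
    refine Finset.sum_congr rfl fun j _ => ?_
    have hinner : ∑ e ∈ Finset.univ.filter (fun e => head e = j ∧ s e ≤ t),
        σ (head e) t * φ e (t - s e)
        = σ j t * ∑ e ∈ Finset.univ.filter (fun e => head e = j ∧ s e ≤ t), φ e (t - s e) := by
      rw [Finset.mul_sum]
      refine Finset.sum_congr rfl fun e he => ?_
      simp only [Finset.mem_filter] at he
      rw [he.2.1]
    rw [hinner]
    rcases hpart j with ⟨hjE, hjT, _⟩ | ⟨_, hjT, _⟩ | ⟨_, hjT, hjS⟩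
    · rw [if_neg hjT]
      have : Finset.univ.filter (fun e => head e = j ∧ s e ≤ t) = ∅ := by
        refine Finset.filter_eq_empty_iff.mpr fun e _ => ?_
        rintro ⟨h1, -⟩
        exact hEnoIn e (h1 ▸ hjE)
      rw [this]; simp
    · rw [if_pos hjT, hcons j hjT t htle]
    · rw [if_neg hjT, hσS j hjS t]; ring
  -- S2 = C
  have hS2 : ∑ t ∈ R, ∑ e ∈ Finset.univ.filter (fun e => t + s e ≤ Tmax),
        (if tail e ∈ T then σ (tail e) t else 0) * φ e t = C := by
    refine Finset.sum_congr rfl fun t _ => ?_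
    have hfib := benders_sum_fiber tail T (fun e => t + s e ≤ Tmax)
        (fun e => (if tail e ∈ T then σ (tail e) t else 0) * φ e t)
    have heq : ∀ e : A, (if tail e ∈ T then (if tail e ∈ T then σ (tail e) t else 0) * φ e t else 0)
        = (if tail e ∈ T then σ (tail e) t else 0) * φ e t := by
      intro e; split_ifs <;> simp
    simp only [heq] at hfib
    rw [← hfib]
    have hjstep : ∀ j ∈ T,
        ∑ e ∈ Finset.univ.filter (fun e => tail e = j ∧ t + s e ≤ Tmax),
          (if tail e ∈ T then σ (tail e) t else 0) * φ e t
        = σ j t * ∑ e ∈ Finset.univ.filter (fun e => tail e = j ∧ t + s e ≤ Tmax), φ e t := by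
      intro j hj
      rw [Finset.mul_sum]
      refine Finset.sum_congr rfl fun e he => ?_
      simp only [Finset.mem_filter] at he
      rw [he.2.1, if_pos hj]
    rw [Finset.sum_congr rfl hjstep]
    rw [Finset.sum_ite_mem, Finset.univ_inter]
  -- S3 bound
  have hS3 : ∑ t ∈ R, ∑ e ∈ Finset.univ.filter (fun e => t + s e ≤ Tmax), π e t * φ e t
      ≤ ∑ e : A, xbar e * ∑ t ∈ R.filter (fun t => t + s e ≤ Tmax), u e t * π e t := by
    have h1 : ∑ t ∈ R, ∑ e ∈ Finset.univ.filter (fun e => t + s e ≤ Tmax), π e t * φ e t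
        ≤ ∑ t ∈ R, ∑ e ∈ Finset.univ.filter (fun e => t + s e ≤ Tmax),
            π e t * (xbar e * u e t) := by
      refine Finset.sum_le_sum fun t _ => Finset.sum_le_sum fun e he => ?_
      simp only [Finset.mem_filter] at he
      exact mul_le_mul_of_nonneg_left (hcap e t he.2) (hπ e t he.2)
    refine h1.trans_eq ?_
    rw [benders_swap (fun e t => t + s e ≤ Tmax)]
    refine Finset.sum_congr rfl fun e _ => ?_
    rw [Finset.mul_sum]
    exact Finset.sum_congr rfl fun t _ => by ring
  -- S4 bound
  have hS4 : ∑ t ∈ R, ∑ e ∈ Finset.univ.filter (fun e => t + s e ≤ Tmax),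
        (if tail e ∈ E then πd (tail e) else 0) * φ e t
      ≤ ∑ k ∈ E, d k * πd k := by
    have h1 : ∑ t ∈ R, ∑ e ∈ Finset.univ.filter (fun e => t + s e ≤ Tmax),
          (if tail e ∈ E then πd (tail e) else 0) * φ e t
        = ∑ k ∈ E, πd k * ∑ t ∈ R,
            ∑ e ∈ Finset.univ.filter (fun e => tail e = k ∧ t + s e ≤ Tmax), φ e t := by
      have hper : ∀ t : ℕ, ∑ e ∈ Finset.univ.filter (fun e => t + s e ≤ Tmax),
            (if tail e ∈ E then πd (tail e) else 0) * φ e t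
          = ∑ k ∈ E, πd k *
              ∑ e ∈ Finset.univ.filter (fun e => tail e = k ∧ t + s e ≤ Tmax), φ e t := by
        intro t
        have hfib := benders_sum_fiber tail E (fun e => t + s e ≤ Tmax)
          (fun e => (if tail e ∈ E then πd (tail e) else 0) * φ e t)
        have heq : ∀ e : A, (if tail e ∈ E then (if tail e ∈ E then πd (tail e) else 0) * φ e t else 0)
            = (if tail e ∈ E then πd (tail e) else 0) * φ e t := by
          intro e; split_ifs <;> simp
        simp only [heq] at hfib
        rw [← hfib]
        refine Finset.sum_congr rfl fun k hk => ?_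
        rw [Finset.mul_sum]
        refine Finset.sum_congr rfl fun e he => ?_
        simp only [Finset.mem_filter] at he
        rw [he.2.1, if_pos hk]
      rw [Finset.sum_congr rfl fun t _ => hper t, Finset.sum_comm]
      exact Finset.sum_congr rfl fun k _ => (Finset.mul_sum _ _ _).symm
    rw [h1]
    refine Finset.sum_le_sum fun k hk => ?_
    rw [mul_comm]
    exact mul_le_mul_of_nonneg_right (hdem k hk) (hπd k hk)
  calc ∑ k ∈ E, ∑ t ∈ R, ∑ e ∈ Finset.univ.filter (fun e => tail e = k ∧ t + s e ≤ Tmax), φ e t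
      ≤ ∑ t ∈ R, ∑ e ∈ Finset.univ.filter (fun e => t + s e ≤ Tmax),
          (σ (head e) (t + s e) - (if tail e ∈ T then σ (tail e) t else 0)
            + π e t + (if tail e ∈ E then πd (tail e) else 0)) * φ e t := step0 ▸ step1
    _ = C - C + (∑ t ∈ R, ∑ e ∈ Finset.univ.filter (fun e => t + s e ≤ Tmax), π e t * φ e t)
          + (∑ t ∈ R, ∑ e ∈ Finset.univ.filter (fun e => t + s e ≤ Tmax),
              (if tail e ∈ E then πd (tail e) else 0) * φ e t) := by rw [split, hS1, hS2]
    _ ≤ C - C + (∑ e : A, xbar e * ∑ t ∈ R.filter (fun t => t + s e ≤ Tmax), u e t * π e t)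
          + ∑ k ∈ E, d k * πd k := by
        gcongr
    _ = _ := by ring
end

section
/- The clearance time of the aggregated restricted master problem is a lower bound on the true minimum clearance time: in the time-expanded flow setting, call x ∈ {0,1}^A convergent if Σ_{e : tail(e) = i} x_e ≤ 1 for every node i ∈ E ∪ T. For T ≤ T_max, suppose there exist a convergent x and a flow φ over horizon {0, …, T} for x whose objective value equals the total demand Σ_{k ∈ E} d_k. Then there exist a convergent x' and a master-feasible aggregate flow ψ over horizon {0, …, T} (i.e., ψ_e ≥ 0 with conservation at every transit node, ψ_e ≤ x'_e · Σ_{t ≤ T} u_{e,t}, and Σ_{e : tail(e) = k} ψ_e ≤ d_k for every k) with Σ_{k ∈ E} Σ_{e : tail(e) = k} ψ_e = Σ_{k ∈ E} d_k. Consequently, the least T for which the master problem can evacuate the total demand is at most the least T for which some convergent plan and schedule evacuates the total demand. -/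
/-- A flow over the horizon `{0, …, T}` for the arc selection `x` in the
time-expanded flow setting. -/
def IsEvacFlow {N A : Type*} [Fintype A] [DecidableEq N]
    (tail head : A → N) (Tr E : Finset N)
    (s : A → ℕ) (u : A → ℕ → ℝ) (d : N → ℝ)
    (T : ℕ) (x : A → ℝ) (φ : A → ℕ → ℝ) : Prop :=
  (∀ e t, t + s e ≤ T → 0 ≤ φ e t) ∧
  (∀ i ∈ Tr, ∀ t ≤ T,
    ∑ e ∈ Finset.univ.filter (fun e => head e = i ∧ s e ≤ t), φ e (t - s e)
      = ∑ e ∈ Finset.univ.filter (fun e => tail e = i ∧ t + s e ≤ T), φ e t) ∧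
  (∀ e t, t + s e ≤ T → φ e t ≤ x e * u e t) ∧
  (∀ k ∈ E,
    ∑ t ∈ Finset.range (T + 1),
      ∑ e ∈ Finset.univ.filter (fun e => tail e = k ∧ t + s e ≤ T), φ e t ≤ d k)

/-- The objective value of a flow over the horizon `{0, …, T}`. -/
def evacFlowObj {N A : Type*} [Fintype A] [DecidableEq N]
    (tail : A → N) (E : Finset N) (s : A → ℕ) (T : ℕ) (φ : A → ℕ → ℝ) : ℝ :=
  ∑ k ∈ E, ∑ t ∈ Finset.range (T + 1),
    ∑ e ∈ Finset.univ.filter (fun e => tail e = k ∧ t + s e ≤ T), φ e t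

/-- A master-feasible aggregate flow over the horizon `{0, …, T}`:
nonnegative, conserved at every transit node, within the time-aggregated
capacities of selected arcs, and demand-feasible. -/
def MasterFeasible {N A : Type*} [Fintype A] [DecidableEq N]
    (tail head : A → N) (Tr E : Finset N)
    (u : A → ℕ → ℝ) (d : N → ℝ)
    (T : ℕ) (x : A → ℝ) (ψ : A → ℝ) : Prop :=
  (∀ e, 0 ≤ ψ e) ∧
  (∀ i ∈ Tr,
    ∑ e ∈ Finset.univ.filter (fun e => head e = i), ψ e
      = ∑ e ∈ Finset.univ.filter (fun e => tail e = i), ψ e) ∧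
  (∀ e, ψ e ≤ x e * ∑ t ∈ Finset.range (T + 1), u e t) ∧
  (∀ k ∈ E, ∑ e ∈ Finset.univ.filter (fun e => tail e = k), ψ e ≤ d k)

/-- A binary arc selection is convergent if at every node of `E ∪ T` the
selected outgoing arcs number at most one. -/
def ConvergentSel {N A : Type*} [Fintype A] [DecidableEq N]
    (tail : A → N) (E Tr : Finset N) (x : A → ℝ) : Prop :=
  ∀ i ∈ E ∪ Tr, ∑ e ∈ Finset.univ.filter (fun e => tail e = i), x e ≤ 1


lemma swap_lemma {A : Type*} [Fintype A] (P : A → Prop) [DecidablePred P]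
    (Q : A → ℕ → Prop) [∀ e t, Decidable (Q e t)] (n : ℕ) (f : A → ℕ → ℝ) :
    ∑ t ∈ Finset.range n, ∑ e ∈ Finset.univ.filter (fun e => P e ∧ Q e t), f e t
      = ∑ e ∈ Finset.univ.filter P, ∑ t ∈ (Finset.range n).filter (Q e), f e t := by
  simp only [Finset.sum_filter, ite_and]
  rw [Finset.sum_comm]
  refine Finset.sum_congr rfl fun e _ => ?_
  by_cases hP : P e <;> simp [hP]

lemma reindex_lemma {A : Type*} (s : A → ℕ) (T' : ℕ) (φ : A → ℕ → ℝ) (e : A) :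
    ∑ t ∈ (Finset.range (T'+1)).filter (fun t => s e ≤ t), φ e (t - s e)
      = ∑ t ∈ (Finset.range (T'+1)).filter (fun t => t + s e ≤ T'), φ e t := by
  refine Finset.sum_nbij' (i := fun t => t - s e) (j := fun t => t + s e) ?_ ?_ ?_ ?_ ?_
  all_goals intro t ht
  · simp only [Finset.mem_filter, Finset.mem_range] at ht ⊢; omega
  · simp only [Finset.mem_filter, Finset.mem_range] at ht ⊢; omega
  · simp only [Finset.mem_filter, Finset.mem_range] at ht; omega
  · simp only [Finset.mem_filter, Finset.mem_range] at ht; omega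
  · simp only []

lemma master_aux {N A : Type*} [Fintype A] [DecidableEq N]
    (tail head : A → N) (Tr E : Finset N)
    (s : A → ℕ) (u : A → ℕ → ℝ) (hu : ∀ e t, 0 ≤ u e t)
    (d : N → ℝ) (T' : ℕ)
    (x : A → ℝ) (φ : A → ℕ → ℝ)
    (hx : ∀ e, x e = 0 ∨ x e = 1)
    (hf : IsEvacFlow tail head Tr E s u d T' x φ) :
    ∃ ψ : A → ℝ, MasterFeasible tail head Tr E u d T' x ψ ∧
      ∑ k ∈ E, ∑ e ∈ Finset.univ.filter (fun e => tail e = k), ψ e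
        = evacFlowObj tail E s T' φ := by
  obtain ⟨hpos, hcons, hcap, hdem⟩ := hf
  set ψ : A → ℝ := fun e => ∑ t ∈ (Finset.range (T'+1)).filter (fun t => t + s e ≤ T'), φ e t
    with hψ
  have hψnn : ∀ e, 0 ≤ ψ e := by
    intro e
    refine Finset.sum_nonneg fun t ht => ?_
    simp only [Finset.mem_filter, Finset.mem_range] at ht
    exact hpos e t ht.2
  have hout : ∀ i : N, ∑ e ∈ Finset.univ.filter (fun e => tail e = i), ψ e
      = ∑ t ∈ Finset.range (T'+1),
          ∑ e ∈ Finset.univ.filter (fun e => tail e = i ∧ t + s e ≤ T'), φ e t := by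
    intro i
    rw [swap_lemma (fun e => tail e = i) (fun e t => t + s e ≤ T')]
  refine ⟨ψ, ⟨hψnn, ?_, ?_, ?_⟩, ?_⟩
  · -- conservation
    intro i hi
    rw [hout i]
    have h1 : ∑ e ∈ Finset.univ.filter (fun e => head e = i), ψ e
        = ∑ t ∈ Finset.range (T'+1),
            ∑ e ∈ Finset.univ.filter (fun e => head e = i ∧ s e ≤ t), φ e (t - s e) := by
      rw [swap_lemma (fun e => head e = i) (fun e t => s e ≤ t) (T'+1)
        (fun e t => φ e (t - s e))]
      refine Finset.sum_congr rfl fun e _ => ?_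
      exact (reindex_lemma s T' φ e).symm ▸ (reindex_lemma s T' φ e)
    rw [h1]
    refine Finset.sum_congr rfl fun t ht => ?_
    exact hcons i hi t (by simpa using Nat.lt_succ_iff.mp (Finset.mem_range.mp ht))
  · -- capacity
    intro e
    have hxnn : 0 ≤ x e := by rcases hx e with h | h <;> simp [h]
    calc ψ e ≤ ∑ t ∈ (Finset.range (T'+1)).filter (fun t => t + s e ≤ T'), x e * u e t := by
          refine Finset.sum_le_sum fun t ht => ?_
          simp only [Finset.mem_filter, Finset.mem_range] at ht
          exact hcap e t ht.2
      _ = x e * ∑ t ∈ (Finset.range (T'+1)).filter (fun t => t + s e ≤ T'), u e t := by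
          rw [Finset.mul_sum]
      _ ≤ x e * ∑ t ∈ Finset.range (T'+1), u e t := by
          refine mul_le_mul_of_nonneg_left ?_ hxnn
          exact Finset.sum_le_sum_of_subset_of_nonneg (Finset.filter_subset _ _)
            (fun t ht _ => hu e t)
  · -- demand
    intro k hk
    rw [hout k]
    exact hdem k hk
  · -- objective
    unfold evacFlowObj
    exact Finset.sum_congr rfl fun k _ => hout k

/-- The clearance time of the aggregated restricted master
problem is a lower bound on the true minimum clearance time: if for `T ≤ Tmax`
some convergent binary plan and flow evacuates the total demand over horizon
`{0, …, T}`, then some convergent binary plan admits a master-feasible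
aggregate flow over `{0, …, T}` evacuating the total demand; consequently the
least horizon for which the master problem can evacuate the total demand is at
most the least horizon for which some convergent plan and schedule does. -/
theorem master_clearance_time_le_plan_clearance_time
    {N A : Type*} [Fintype N] [Fintype A] [DecidableEq N]
    (tail head : A → N) (E T S : Finset N)
    (hpart : ∀ v : N,
      (v ∈ E ∧ v ∉ T ∧ v ∉ S) ∨ (v ∉ E ∧ v ∈ T ∧ v ∉ S) ∨ (v ∉ E ∧ v ∉ T ∧ v ∈ S))
    (hEnoIn : ∀ e : A, head e ∉ E)
    (hSnoOut : ∀ e : A, tail e ∉ S)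
    (s : A → ℕ) (hs : ∀ e : A, 1 ≤ s e)
    (Tmax : ℕ)
    (u : A → ℕ → ℝ) (hu : ∀ e t, 0 ≤ u e t)
    (d : N → ℝ) (hd : ∀ k ∈ E, 0 ≤ d k)
    (Th : ℕ) (hT : Th ≤ Tmax)
    (hex : ∃ (x : A → ℝ) (φ : A → ℕ → ℝ),
      (∀ e : A, x e = 0 ∨ x e = 1) ∧ ConvergentSel tail E T x ∧
      IsEvacFlow tail head T E s u d Th x φ ∧
      evacFlowObj tail E s Th φ = ∑ k ∈ E, d k) :
    (∃ (x' : A → ℝ) (ψ : A → ℝ),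
      (∀ e : A, x' e = 0 ∨ x' e = 1) ∧ ConvergentSel tail E T x' ∧
      MasterFeasible tail head T E u d Th x' ψ ∧
      ∑ k ∈ E, ∑ e ∈ Finset.univ.filter (fun e => tail e = k), ψ e
        = ∑ k ∈ E, d k) ∧
    sInf {T' : ℕ | T' ≤ Tmax ∧ ∃ (x' : A → ℝ) (ψ : A → ℝ),
        (∀ e : A, x' e = 0 ∨ x' e = 1) ∧ ConvergentSel tail E T x' ∧
        MasterFeasible tail head T E u d T' x' ψ ∧
        ∑ k ∈ E, ∑ e ∈ Finset.univ.filter (fun e => tail e = k), ψ e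
          = ∑ k ∈ E, d k}
      ≤ sInf {T' : ℕ | T' ≤ Tmax ∧ ∃ (x : A → ℝ) (φ : A → ℕ → ℝ),
        (∀ e : A, x e = 0 ∨ x e = 1) ∧ ConvergentSel tail E T x ∧
        IsEvacFlow tail head T E s u d T' x φ ∧
        evacFlowObj tail E s T' φ = ∑ k ∈ E, d k} := by
  obtain ⟨x, φ, hxbin, hconv, hflow, hobj⟩ := hex
  have hmain : ∃ (x' : A → ℝ) (ψ : A → ℝ),
      (∀ e : A, x' e = 0 ∨ x' e = 1) ∧ ConvergentSel tail E T x' ∧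
      MasterFeasible tail head T E u d Th x' ψ ∧
      ∑ k ∈ E, ∑ e ∈ Finset.univ.filter (fun e => tail e = k), ψ e
        = ∑ k ∈ E, d k := by
    obtain ⟨ψ, hmf, hψobj⟩ := master_aux tail head T E s u hu d Th x φ hxbin hflow
    exact ⟨x, ψ, hxbin, hconv, hmf, by rw [hψobj, hobj]⟩
  refine ⟨hmain, ?_⟩
  set S2 := {T' : ℕ | T' ≤ Tmax ∧ ∃ (x : A → ℝ) (φ : A → ℕ → ℝ),
        (∀ e : A, x e = 0 ∨ x e = 1) ∧ ConvergentSel tail E T x ∧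
        IsEvacFlow tail head T E s u d T' x φ ∧
        evacFlowObj tail E s T' φ = ∑ k ∈ E, d k} with hS2
  have hne : S2.Nonempty := ⟨Th, hT, x, φ, hxbin, hconv, hflow, hobj⟩
  have hmem := Nat.sInf_mem hne
  rw [hS2] at hmem
  obtain ⟨hle, x2, φ2, hxbin2, hconv2, hflow2, hobj2⟩ := hmem
  refine Nat.sInf_le ?_
  obtain ⟨ψ2, hmf2, hψobj2⟩ := master_aux tail head T E s u hu d _ x2 φ2 hxbin2 hflow2
  exact ⟨hle, x2, ψ2, hxbin2, hconv2, hmf2, by rw [hψobj2, hobj2]⟩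
end
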